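/- arXiv:math/0008002 — 2 statements merged into one kernel-verified Lean document; each statement's English description precedes it below -/
import Mathlib

section
/- Let k be a field with char k = 0 (or char k > m), let S_m = k[U_i^{(j)} : 1 ≤ i ≤ N, 0 ≤ j ≤ m], and let D : S_m → S_{m+1} be the unique k-derivation with D(U_i^{(j)}) = U_i^{(j+1)} for all i and j ≤ m. For f ∈ k[U_1,...,U_N] = S_0 and a k-algebra homomorphism θ : k[U] → A[t]/(t^{m+1}) with θ(U_i) = ∑_{j=0}^m θ_i^{(j)} t^j, one has θ(f) = 0 if and only if D^j(f) vanishes at the point (j'! · θ_i^{(j')})_{i,j'} for all 0 ≤ j ≤ m. -/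
/-!
Let `T` evaluate the variable `U_i^{(j)}` at the `j`-th derivative of `θ(U_i) ∈ A[t]`. Since `T`
intertwines the derivation `D` with `d/dt`, we get `T (D^j f) = (d/dt)^j θ(f)`, and evaluating at
`t = 0` sends `T` to evaluation at the point `(j! θ_i^{(j)})`. Hence `D^j f` vanishes at that point
iff `j!` times the `j`-th coefficient of `θ(f)` vanishes, which in characteristic zero means that
the coefficient itself vanishes; and `θ(f)` lies in `(t^{m+1})` iff its first `m + 1` coefficients
vanish.
-/

section JetDerivation

open MvPolynomial

variable (σ k : Type*) [CommSemiring k]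

noncomputable def jetDerivation :
    Derivation k (MvPolynomial (σ × ℕ) k) (MvPolynomial (σ × ℕ) k) :=
  mkDerivation k fun p => X (p.1, p.2 + 1)

variable {σ k}

theorem jetDerivation_X (p : σ × ℕ) : jetDerivation σ k (X p) = X (p.1, p.2 + 1) :=
  mkDerivation_X k _ p

variable {B : Type*} [CommSemiring B] [Algebra k B] (d : Derivation k B B) (g : σ → B)

theorem aeval_jetDerivation (s : MvPolynomial (σ × ℕ) k) :
    aeval (fun p => d^[p.2] (g p.1)) (jetDerivation σ k s) =
      d (aeval (fun p => d^[p.2] (g p.1)) s) := by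
  induction s using MvPolynomial.induction_on with
  | C a => simp only [← algebraMap_eq, AlgHom.commutes, Derivation.map_algebraMap, map_zero]
  | add p q hp hq => simp only [map_add, hp, hq]
  | mul_X p i hp =>
    simp only [Derivation.leibniz, smul_eq_mul, map_add, map_mul, hp, jetDerivation_X, aeval_X,
      Function.iterate_succ_apply']

theorem aeval_iterate_jetDerivation (j : ℕ) (s : MvPolynomial (σ × ℕ) k) :
    aeval (fun p => d^[p.2] (g p.1)) ((jetDerivation σ k)^[j] s) =
      d^[j] (aeval (fun p => d^[p.2] (g p.1)) s) := by
  induction j with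
  | zero => rfl
  | succ j ih =>
    rw [Function.iterate_succ_apply', Function.iterate_succ_apply', aeval_jetDerivation, ih]

theorem aeval_rename_jet_zero (f : MvPolynomial σ k) :
    aeval (fun p => d^[p.2] (g p.1)) (rename (fun i => (i, 0)) f) = aeval g f := by
  rw [aeval_rename]
  rfl

end JetDerivation

namespace Polynomial

theorem eval_zero_iterate_derivative {R : Type*} [Semiring R] (p : R[X]) (n : ℕ) :
    eval 0 (derivative^[n] p) = n.factorial • p.coeff n := by
  rw [← coeff_zero_eq_eval_zero, coeff_iterate_derivative, zero_add, Nat.descFactorial_self]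

theorem coeff_sum_fin_C_mul_X_pow {R : Type*} [Semiring R] {m : ℕ} (v : Fin m → R) (n : ℕ) :
    (∑ j : Fin m, C (v j) * X ^ (j : ℕ)).coeff n = if h : n < m then v ⟨n, h⟩ else 0 := by
  simp only [finsetSum_coeff, coeff_C_mul_X_pow]
  split_ifs with h
  · rw [Finset.sum_eq_single ⟨n, h⟩ (fun j _ hj => if_neg fun hn => hj (Fin.ext hn.symm))
      (fun hn => absurd (Finset.mem_univ _) hn), if_pos rfl]
  · exact Finset.sum_eq_zero fun j _ => if_neg fun (hn : n = j) => h (hn ▸ j.isLt)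

end Polynomial

theorem nsmul_eq_zero_iff_of_charZero (k : Type*) {M : Type*} [Field k] [CharZero k]
    [AddCommGroup M] [Module k M] {n : ℕ} (hn : n ≠ 0) {x : M} : n • x = 0 ↔ x = 0 := by
  rw [← Nat.cast_smul_eq_nsmul k, smul_eq_zero, or_iff_right (Nat.cast_ne_zero.mpr hn)]

open Polynomial in
theorem aeval_factorial_smul_iterate_jetDerivation {k A σ : Type*} [CommSemiring k] [CommRing A]
    [Algebra k A] {m : ℕ} (θ : σ → Fin (m + 1) → A) (f : MvPolynomial σ k) (j : ℕ) :
    MvPolynomial.aeval (fun p : σ × ℕ =>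
        if h : p.2 < m + 1 then p.2.factorial • θ p.1 ⟨p.2, h⟩ else (0 : A))
        ((jetDerivation σ k)^[j] (MvPolynomial.rename (fun i => (i, 0)) f)) =
      j.factorial • (MvPolynomial.aeval (fun i => ∑ l : Fin (m + 1), C (θ i l) * X ^ (l : ℕ))
        f).coeff j := by
  set g : σ → A[X] := fun i => ∑ l : Fin (m + 1), C (θ i l) * X ^ (l : ℕ)
  set d : Derivation k A[X] A[X] := (derivative' (R := A)).restrictScalars k
  have hd : ⇑d = derivative := rfl
  have point : (fun p : σ × ℕ =>
      if h : p.2 < m + 1 then p.2.factorial • θ p.1 ⟨p.2, h⟩ else (0 : A)) =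
      fun p => (aeval (0 : A)).restrictScalars k (d^[p.2] (g p.1)) := by
    funext p
    rw [AlgHom.coe_restrictScalars', coe_aeval_eq_eval, hd, eval_zero_iterate_derivative,
      coeff_sum_fin_C_mul_X_pow]
    split_ifs <;> simp
  rw [point, ← MvPolynomial.comp_aeval_apply, aeval_iterate_jetDerivation, aeval_rename_jet_zero,
    AlgHom.coe_restrictScalars', coe_aeval_eq_eval, hd, eval_zero_iterate_derivative]

theorem stmt1 (k : Type*) [Field k] [CharZero k] (A : Type*) [CommRing A] [Algebra k A]
    (N m : ℕ) (f : MvPolynomial (Fin N) k) (θ : Fin N → Fin (m + 1) → A) :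
    (MvPolynomial.aeval
        (fun i : Fin N => ∑ j : Fin (m + 1),
          Polynomial.C (θ i j) * Polynomial.X ^ (j : ℕ)) f ∈
        Ideal.span {(Polynomial.X : Polynomial A) ^ (m + 1)}) ↔
      ∀ j ≤ m,
        MvPolynomial.aeval
          (fun p : Fin N × ℕ =>
            if h : p.2 < m + 1 then (Nat.factorial p.2) • θ p.1 ⟨p.2, h⟩ else (0 : A))
          ((⇑(MvPolynomial.mkDerivation k
              (fun p : Fin N × ℕ => (MvPolynomial.X (p.1, p.2 + 1) :
                MvPolynomial (Fin N × ℕ) k))))^[j]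
            (MvPolynomial.rename (fun i : Fin N => (i, (0 : ℕ))) f)) = 0 := by
  rw [Ideal.mem_span_singleton, Polynomial.X_pow_dvd_iff]
  exact forall_congr' fun j => imp_congr Nat.lt_succ_iff
    ((nsmul_eq_zero_iff_of_charZero k j.factorial_ne_zero).symm.trans
      (Eq.congr_left (aeval_factorial_smul_iterate_jetDerivation θ f j).symm))
end

section
/- Let X ⊂ A^{2n} (n ≥ 3) be the rank ≤ 1 locus of 2×n matrices (the cone over the Segre embedding P^1 × P^{n−1} ⊂ P^{2n−1}). Then X_m is irreducible for every m ≥ 1, even though X is not a complete intersection. -/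
noncomputable section

/-- The universal substitution `U_i ↦ ∑_j X_{i,j} t^j` computing the equations of jet schemes:
a polynomial `f` in the variables `σ` is sent to a polynomial in `t` whose coefficients are the
equations of the jet scheme of `V(f)`. -/
def jetSub (k : Type*) [CommRing k] (σ : Type*) (m : ℕ) :
    MvPolynomial σ k →ₐ[k] Polynomial (MvPolynomial (σ × Fin (m + 1)) k) :=
  MvPolynomial.aeval fun i =>
    ∑ j : Fin (m + 1), Polynomial.C (MvPolynomial.X (i, j)) * Polynomial.X ^ (j : ℕ)

/-- The ideal of the `m`-th jet scheme of the closed subscheme of affine space `Spec k[σ]`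
defined by the equations in `F`: it is generated by the coefficients of `t^l`, `0 ≤ l ≤ m`,
of the universal substitutions of the elements of `F`. -/
def jetIdeal (k : Type*) [CommRing k] (σ : Type*) (m : ℕ)
    (F : Set (MvPolynomial σ k)) : Ideal (MvPolynomial (σ × Fin (m + 1)) k) :=
  Ideal.span {g | ∃ f ∈ F, ∃ l ≤ m, g = Polynomial.coeff (jetSub k σ m f) l}

/-- The ideal of the fiber `π_m⁻¹(x)` of the `m`-th jet scheme over the point `x`. -/
def jetFiberIdeal (k : Type*) [CommRing k] (σ : Type*) (m : ℕ)
    (F : Set (MvPolynomial σ k)) (x : σ → k) : Ideal (MvPolynomial (σ × Fin (m + 1)) k) :=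
  jetIdeal k σ m F ⊔
    Ideal.span (Set.range fun i : σ =>
      MvPolynomial.X (i, (0 : Fin (m + 1))) - MvPolynomial.C (x i))

/-- The ideal of the locus `π_m⁻¹(Z)` of `m`-jets lying over the closed subscheme `Z = V(G)`. -/
def jetOverIdeal (k : Type*) [CommRing k] (σ : Type*) (m : ℕ)
    (F G : Set (MvPolynomial σ k)) : Ideal (MvPolynomial (σ × Fin (m + 1)) k) :=
  jetIdeal k σ m F ⊔
    Ideal.span ((MvPolynomial.rename fun i : σ => (i, (0 : Fin (m + 1)))) '' G)

/-- The Zariski tangent space at a point `x` of the subvariety of affine space cut out by the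
equations `F`, namely the common kernel of the differentials at `x`. -/
def tangentSpaceAt (k : Type*) [Field k] {σ : Type*} [Fintype σ]
    (F : Set (MvPolynomial σ k)) (x : σ → k) : Submodule k (σ → k) :=
  ⨅ f ∈ F, LinearMap.ker (∑ i : σ,
    MvPolynomial.eval x (MvPolynomial.pderiv i f) •
      (LinearMap.proj i : (σ → k) →ₗ[k] k))


/-- The `2 × 2` minors `U_i V_j − U_j V_i` of the generic `2 × n` matrix, cutting out the cone
over the Segre embedding of `ℙ¹ × ℙ^{n-1}` in `𝔸^{2n}`. -/
def segreMinors (k : Type*) [CommRing k] (n : ℕ) : Set (MvPolynomial (Fin 2 × Fin n) k) :=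
  {g | ∃ i j : Fin n,
    g = MvPolynomial.X ((0 : Fin 2), i) * MvPolynomial.X ((1 : Fin 2), j) -
        MvPolynomial.X ((0 : Fin 2), j) * MvPolynomial.X ((1 : Fin 2), i)}

/-!
A point of `X_m` is a `2 × n` matrix of power series whose `2 × 2` minors vanish modulo
`t^(m+1)`. Every such jet `p` lies on a line `s ↦ p + s • d` all of whose points with `s ≠ 0`
are jets of rank-one matrices `(a_r w_i)`: if the minimal order `a` of the entries of `p` is
attained in the first row `U`, at column `i₀`, write `U = t^a u` with `u i₀` a unit and
`λ = V i₀ / u i₀`; the matrices with rows `t^a w` and `(λ + s) w`, where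
`w = u + s⁻¹ (V - λ u)`, agree with `(U, V + s u)` to order `m`. Hence the jets of rank-one
matrices are dense in `X_m`. They are the image of a polynomial map from an affine space, so the
ideal of `X_m` is the kernel of a ring map into a polynomial ring, hence prime.

Every element of the ideal `I` of minors vanishes to order two at the origin, so the Hessian at
the origin of any element of `I` is a linear combination of the Hessians of the generators of
`I`. The Hessians of the `n.choose 2` minors are linearly independent, so `I` needs at least
`n.choose 2 ≥ n > n - 1` generators.
-/

namespace MvPolynomial

theorem dvd_aeval_sub_aeval {k S σ : Type*} [CommRing k] [CommRing S] [Algebra k S] {d : S}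
    {g g' : σ → S} (h : ∀ i, d ∣ g i - g' i) (f : MvPolynomial σ k) :
    d ∣ aeval g f - aeval g' f := by
  induction f using induction_on with
  | C a => simp
  | add p q hp hq => simpa [add_sub_add_comm] using dvd_add hp hq
  | mul_X p i hp => simpa using dvd_mul_sub_mul hp (h i)

theorem eval_eq_zero_of_forall_ne_zero_eval_add_smul {k ι : Type*} [CommRing k] [IsDomain k]
    [Infinite k] (p d : ι → k) (f : MvPolynomial ι k)
    (h : ∀ s : k, s ≠ 0 → eval (p + s • d) f = 0) : eval p f = 0 := by
  let F : Polynomial k :=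
    aeval (fun x => Polynomial.C (p x) + Polynomial.X * Polynomial.C (d x)) f
  have hF : ∀ s, F.eval s = eval (p + s • d) f := fun s => by
    rw [← Polynomial.coe_aeval_eq_eval, comp_aeval_apply, ← aeval_eq_eval]
    congr 2
    funext x
    simpa using mul_comm _ _
  have hF₀ : F = 0 := Polynomial.eq_zero_of_infinite_isRoot F <|
    (Set.finite_singleton 0).infinite_compl.mono fun s hs => by simpa [hF] using h s hs
  simpa [hF₀] using (hF 0).symm

variable {σ R : Type*} [CommRing R]

variable (σ R) in
def singularAtZero : Ideal (MvPolynomial σ R) where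
  carrier := {q | constantCoeff q = 0 ∧ ∀ a, constantCoeff (pderiv a q) = 0}
  zero_mem' := by simp
  add_mem' := by
    rintro p q ⟨hp0, hp1⟩ ⟨hq0, hq1⟩
    exact ⟨by simp [hp0, hq0], fun a => by simp [hp1, hq1]⟩
  smul_mem' := by
    rintro c q ⟨hq0, hq1⟩
    exact ⟨by simp [hq0], fun a => by simp [Derivation.leibniz, hq0, hq1]⟩

def hessianAtZero {T : Type*} (e : T → σ × σ) : MvPolynomial σ R →ₗ[R] T → R where
  toFun q t := constantCoeff (pderiv (e t).1 (pderiv (e t).2 q))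
  map_add' p q := by
    funext t
    simp
  map_smul' c q := by
    funext t
    simp

theorem hessianAtZero_mul {T : Type*} (e : T → σ × σ) {q : MvPolynomial σ R}
    (hq : q ∈ singularAtZero σ R) (c : MvPolynomial σ R) :
    hessianAtZero e (c * q) = constantCoeff c • hessianAtZero e q := by
  obtain ⟨hq0, hq1⟩ := hq
  funext t
  simp [hessianAtZero, Derivation.leibniz, hq0, hq1]

theorem hessianAtZero_mem_span {T : Type*} (e : T → σ × σ) {S : Set (MvPolynomial σ R)}
    (hS : S ⊆ singularAtZero σ R) {q : MvPolynomial σ R} (hq : q ∈ Ideal.span S) :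
    hessianAtZero e q ∈ Submodule.span R (hessianAtZero e '' S) := by
  have hsing : Ideal.span S ≤ singularAtZero σ R := Ideal.span_le.2 hS
  induction hq using Submodule.span_induction with
  | mem s hs => exact Submodule.subset_span ⟨s, hs, rfl⟩
  | zero => simp
  | add x y _ _ hx hy => simpa using Submodule.add_mem _ hx hy
  | smul c x hx ih =>
    rw [smul_eq_mul, hessianAtZero_mul e (hsing hx)]
    exact Submodule.smul_mem _ _ ih

end MvPolynomial

section Jets

open PowerSeries

variable {R : Type*} [CommRing R] {σ : Type*} (m : ℕ)

def jetSeries (p : σ × Fin (m + 1) → R) (i : σ) : R⟦X⟧ :=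
  ∑ j : Fin (m + 1), C (p (i, j)) * X ^ (j : ℕ)

def jetPoint (f : σ → R⟦X⟧) : σ × Fin (m + 1) → R :=
  fun x => coeff (x.2 : ℕ) (f x.1)

theorem jetPoint_jetSeries (p : σ × Fin (m + 1) → R) : jetPoint m (jetSeries m p) = p := by
  funext ⟨i, l⟩
  simp [jetPoint, jetSeries, Fin.val_inj]

theorem jetPoint_eq_jetPoint_iff {f g : σ → R⟦X⟧} :
    jetPoint m f = jetPoint m g ↔ ∀ i, X ^ (m + 1) ∣ f i - g i := by
  simp only [X_pow_dvd_iff, map_sub, sub_eq_zero, funext_iff, jetPoint, Prod.forall]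
  exact forall_congr' fun i => ⟨fun h l hl => h ⟨l, hl⟩, fun h l => h l l.2⟩

theorem X_pow_dvd_jetSeries_jetPoint_sub (f : σ → R⟦X⟧) (i : σ) :
    X ^ (m + 1) ∣ jetSeries m (jetPoint m f) i - f i :=
  (jetPoint_eq_jetPoint_iff m).1 (jetPoint_jetSeries m _) i

theorem jetPoint_add_smul (f g : σ → R⟦X⟧) (s : R) :
    jetPoint m (f + s • g) = jetPoint m f + s • jetPoint m g := by
  funext x
  simp [jetPoint]

theorem jetPoint_map {S : Type*} [CommRing S] (φ : R →+* S) (f : σ → R⟦X⟧) :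
    jetPoint m (fun i => map φ (f i)) = fun x => φ (jetPoint m f x) := by
  funext x
  simp [jetPoint]

theorem map_jetSeries {S : Type*} [CommRing S] (φ : R →+* S) (p : σ × Fin (m + 1) → R) (i : σ) :
    map φ (jetSeries m p i) = jetSeries m (fun x => φ (p x)) i := by
  simp [jetSeries]

variable {k : Type*}

theorem eval_coeff_jetSub [CommRing k] (p : σ × Fin (m + 1) → k) (f : MvPolynomial σ k) (l : ℕ) :
    MvPolynomial.eval p ((jetSub k σ m f).coeff l) =
      coeff l (MvPolynomial.aeval (jetSeries m p) f) := by
  have key : (Polynomial.coeToPowerSeries.algHom k).comp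
      ((Polynomial.mapAlgHom (MvPolynomial.aeval p)).comp (jetSub k σ m)) =
      MvPolynomial.aeval (jetSeries m p) :=
    MvPolynomial.algHom_ext fun i => by
      simp only [AlgHom.comp_apply, jetSub, MvPolynomial.aeval_X, map_sum, map_mul, map_pow]
      simp [jetSeries, Polynomial.coeToPowerSeries.algHom_apply]
  rw [← key]
  simp

variable [Field k] (F : Set (MvPolynomial σ k))

theorem mem_zeroLocus_jetIdeal_iff (p : σ × Fin (m + 1) → k) :
    p ∈ MvPolynomial.zeroLocus k (jetIdeal k σ m F) ↔
      ∀ f ∈ F, X ^ (m + 1) ∣ MvPolynomial.aeval (jetSeries m p) f := by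
  simp only [X_pow_dvd_iff, Nat.lt_succ_iff, ← eval_coeff_jetSub]
  constructor
  · exact fun hp f hf l hl => hp _ (Ideal.subset_span ⟨f, hf, l, hl, rfl⟩)
  · intro h q hq
    refine (MvPolynomial.mem_vanishingIdeal_singleton_iff p q).1 (Ideal.span_le.2 ?_ hq)
    rintro _ ⟨f, hf, l, hl, rfl⟩
    exact (MvPolynomial.mem_vanishingIdeal_singleton_iff _ _).2 (h f hf l hl)

theorem jetPoint_mem_zeroLocus_jetIdeal_iff (g : σ → k⟦X⟧) :
    jetPoint m g ∈ MvPolynomial.zeroLocus k (jetIdeal k σ m F) ↔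
      ∀ f ∈ F, X ^ (m + 1) ∣ MvPolynomial.aeval g f := by
  rw [mem_zeroLocus_jetIdeal_iff]
  exact forall₂_congr fun f _ =>
    dvd_iff_dvd_of_dvd_sub <|
      MvPolynomial.dvd_aeval_sub_aeval (X_pow_dvd_jetSeries_jetPoint_sub m g) f

end Jets

section RankOneApprox

open PowerSeries

variable {k : Type*} [Field k] {ι : Type*} {N : ℕ}

theorem exists_rankOne_approx {a : ℕ} {U V : ι → k⟦X⟧}
    (hUV : ∀ i j, X ^ N ∣ U i * V j - U j * V i) (hU : ∀ i, X ^ a ∣ U i) {i₀ : ι}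
    (hV : X ^ a ∣ V i₀) (hi₀ : coeff a (U i₀) ≠ 0) :
    ∃ D : ι → k⟦X⟧, ∀ s : k, s ≠ 0 → ∃ (B : k⟦X⟧) (w : ι → k⟦X⟧),
      ∀ i, X ^ N ∣ X ^ a * w i - U i ∧ X ^ N ∣ B * w i - (V i + s • D i) := by
  choose u hu using hU
  obtain ⟨v, hv⟩ := hV
  have hunit : IsUnit (u i₀) := by
    rw [isUnit_iff_constantCoeff, isUnit_iff_ne_zero]
    simpa [hu, coeff_X_pow_mul'] using hi₀
  obtain ⟨c, hc⟩ := hunit.exists_left_inv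
  -- `X ^ a * (v * c)` is `V i₀ / u i₀`, the `λ` of the construction.
  let F : ι → k⟦X⟧ := fun i => V i - X ^ a * (v * c) * u i
  have hF : ∀ i, X ^ N ∣ X ^ a * F i := fun i => by
    have : X ^ a * F i = c * (U i₀ * V i - U i * V i₀) := by
      simp only [F, hu, hv]
      linear_combination (-(X ^ a * V i)) * hc
    rw [this]
    exact dvd_mul_of_dvd_right (hUV i₀ i) c
  refine ⟨u, fun s hs => ⟨X ^ a * (v * c) + C s, fun i => u i + C s⁻¹ * F i, fun i => ⟨?_, ?_⟩⟩⟩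
  · have : X ^ a * (u i + C s⁻¹ * F i) - U i = C s⁻¹ * (X ^ a * F i) := by
      rw [hu]
      ring
    rw [this]
    exact dvd_mul_of_dvd_right (hF i) _
  · have hs' : C s * C s⁻¹ = (1 : k⟦X⟧) := by rw [← map_mul, mul_inv_cancel₀ hs, map_one]
    have : (X ^ a * (v * c) + C s) * (u i + C s⁻¹ * F i) - (V i + s • u i) =
        C s⁻¹ * (v * c) * (X ^ a * F i) := by
      simp only [F, smul_eq_C_mul]
      linear_combination (V i - X ^ a * (v * c) * u i) * hs'
    rw [this]
    exact dvd_mul_of_dvd_right (hF i) _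

theorem exists_rankOne_approx_matrix (M : Fin 2 × ι → k⟦X⟧)
    (hM : ∀ i j, X ^ N ∣ M (0, i) * M (1, j) - M (0, j) * M (1, i)) :
    ∃ D : Fin 2 × ι → k⟦X⟧, ∀ s : k, s ≠ 0 → ∃ (a : Fin 2 → k⟦X⟧) (w : ι → k⟦X⟧),
      ∀ x, X ^ N ∣ a x.1 * w x.2 - (M x + s • D x) := by
  classical
  by_cases h₀ : ∀ x, M x = 0
  · exact ⟨0, fun s _ => ⟨0, 0, fun x => by simp [h₀]⟩⟩
  have hex : ∃ l, ∃ x, coeff l (M x) ≠ 0 := by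
    obtain ⟨x, hx⟩ := not_forall.1 h₀
    obtain ⟨l, hl⟩ := not_forall.1 fun h => hx (ext fun l => by simpa using h l)
    exact ⟨l, x, hl⟩
  obtain ⟨⟨r₀, i₀⟩, hne⟩ := Nat.find_spec hex
  have hdvd : ∀ x, X ^ Nat.find hex ∣ M x := fun x =>
    X_pow_dvd_iff.2 fun l hl => not_not.1 fun h => Nat.find_min hex hl ⟨x, h⟩
  obtain ⟨r₁, hr₁, hM'⟩ : ∃ r₁, (∀ r, r ≠ r₀ → r = r₁) ∧
      ∀ i j, X ^ N ∣ M (r₀, i) * M (r₁, j) - M (r₀, j) * M (r₁, i) := by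
    obtain rfl | rfl : r₀ = 0 ∨ r₀ = 1 := by fin_cases r₀ <;> simp
    · exact ⟨1, by decide, hM⟩
    · refine ⟨0, by decide, fun i j => ?_⟩
      convert hM j i using 1
      ring
  obtain ⟨D, hD⟩ := exists_rankOne_approx hM' (fun i => hdvd (r₀, i)) (hdvd (r₁, i₀)) hne
  refine ⟨fun x => if x.1 = r₀ then 0 else D x.2, fun s hs => ?_⟩
  obtain ⟨B, w, hBw⟩ := hD s hs
  refine ⟨fun r => if r = r₀ then X ^ Nat.find hex else B, w, fun ⟨r, i⟩ => ?_⟩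
  by_cases hr : r = r₀
  · subst hr
    simpa using (hBw i).1
  · obtain rfl := hr₁ r hr
    simpa [hr] using (hBw i).2

end RankOneApprox

section SegreJets

open PowerSeries

variable {k : Type*} [Field k] {n : ℕ} (m : ℕ)

theorem forall_segreMinors_dvd_aeval_iff {S : Type*} [CommRing S] [Algebra k S] (d : S)
    (M : Fin 2 × Fin n → S) :
    (∀ f ∈ segreMinors k n, d ∣ MvPolynomial.aeval M f) ↔
      ∀ i j, d ∣ M (0, i) * M (1, j) - M (0, j) * M (1, i) := by
  constructor
  · exact fun h i j => by simpa using h _ ⟨i, j, rfl⟩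
  · rintro h _ ⟨i, j, rfl⟩
    simpa using h i j

theorem jetPoint_rankOne_mem_zeroLocus (a : Fin 2 → k⟦X⟧) (w : Fin n → k⟦X⟧) :
    jetPoint m (fun x => a x.1 * w x.2) ∈
      MvPolynomial.zeroLocus k (jetIdeal k (Fin 2 × Fin n) m (segreMinors k n)) := by
  rw [jetPoint_mem_zeroLocus_jetIdeal_iff, forall_segreMinors_dvd_aeval_iff]
  intro i j
  rw [show a 0 * w i * (a 1 * w j) - a 0 * w j * (a 1 * w i) = 0 by ring]
  exact dvd_zero _

theorem exists_line_rankOne_of_mem_zeroLocus {p : (Fin 2 × Fin n) × Fin (m + 1) → k}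
    (hp : p ∈ MvPolynomial.zeroLocus k (jetIdeal k (Fin 2 × Fin n) m (segreMinors k n))) :
    ∃ d, ∀ s : k, s ≠ 0 → ∃ (a : Fin 2 → k⟦X⟧) (w : Fin n → k⟦X⟧),
      p + s • d = jetPoint m (fun x => a x.1 * w x.2) := by
  rw [mem_zeroLocus_jetIdeal_iff, forall_segreMinors_dvd_aeval_iff] at hp
  obtain ⟨D, hD⟩ := exists_rankOne_approx_matrix _ hp
  refine ⟨jetPoint m D, fun s hs => ?_⟩
  obtain ⟨a, w, h⟩ := hD s hs
  refine ⟨a, w, ?_⟩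
  rw [← jetPoint_jetSeries m p, ← jetPoint_add_smul, jetPoint_eq_jetPoint_iff]
  exact fun x => dvd_sub_comm.1 (h x)

theorem eval_eq_zero_of_forall_rankOne [Infinite k] {p : (Fin 2 × Fin n) × Fin (m + 1) → k}
    (hp : p ∈ MvPolynomial.zeroLocus k (jetIdeal k (Fin 2 × Fin n) m (segreMinors k n)))
    {f : MvPolynomial ((Fin 2 × Fin n) × Fin (m + 1)) k}
    (hf : ∀ (a : Fin 2 → k⟦X⟧) (w : Fin n → k⟦X⟧),
      MvPolynomial.eval (jetPoint m fun x => a x.1 * w x.2) f = 0) :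
    MvPolynomial.eval p f = 0 := by
  obtain ⟨d, hd⟩ := exists_line_rankOne_of_mem_zeroLocus m hp
  refine MvPolynomial.eval_eq_zero_of_forall_ne_zero_eval_add_smul p d f fun s hs => ?_
  obtain ⟨a, w, h⟩ := hd s hs
  rw [h]
  exact hf a w

variable (k n) in
def genericRankOneJet :
    (Fin 2 × Fin n) × Fin (m + 1) → MvPolynomial ((Fin 2 ⊕ Fin n) × Fin (m + 1)) k :=
  jetPoint m fun x =>
    jetSeries m MvPolynomial.X (Sum.inl x.1) * jetSeries m MvPolynomial.X (Sum.inr x.2)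

theorem eval_genericRankOneJet (q : (Fin 2 ⊕ Fin n) × Fin (m + 1) → k) :
    (fun x => MvPolynomial.eval q (genericRankOneJet k n m x)) =
      jetPoint m fun x => jetSeries m q (Sum.inl x.1) * jetSeries m q (Sum.inr x.2) := by
  rw [genericRankOneJet, ← jetPoint_map]
  simp [map_jetSeries]

theorem exists_eval_genericRankOneJet_eq (a : Fin 2 → k⟦X⟧) (w : Fin n → k⟦X⟧) :
    ∃ q, (fun x => MvPolynomial.eval q (genericRankOneJet k n m x)) =
      jetPoint m fun x => a x.1 * w x.2 := by
  refine ⟨jetPoint m (Sum.elim a w), ?_⟩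
  rw [eval_genericRankOneJet, jetPoint_eq_jetPoint_iff]
  exact fun x => dvd_mul_sub_mul (X_pow_dvd_jetSeries_jetPoint_sub m _ _)
    (X_pow_dvd_jetSeries_jetPoint_sub m _ _)

theorem vanishingIdeal_zeroLocus_jetIdeal_segreMinors [Infinite k] :
    MvPolynomial.vanishingIdeal k
        (MvPolynomial.zeroLocus k (jetIdeal k (Fin 2 × Fin n) m (segreMinors k n))) =
      RingHom.ker (MvPolynomial.aeval (genericRankOneJet k n m)) := by
  ext f
  have heval : ∀ q, MvPolynomial.eval q (MvPolynomial.aeval (genericRankOneJet k n m) f) =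
      MvPolynomial.eval (fun x => MvPolynomial.eval q (genericRankOneJet k n m x)) f :=
    fun q => MvPolynomial.aeval_bind₁ q _ f
  rw [MvPolynomial.mem_vanishingIdeal_iff, RingHom.mem_ker]
  constructor
  · refine fun hf => MvPolynomial.funext fun q => ?_
    rw [heval, map_zero]
    have hmem := jetPoint_rankOne_mem_zeroLocus m (fun r => jetSeries m q (Sum.inl r))
      (fun i => jetSeries m q (Sum.inr i))
    rw [← eval_genericRankOneJet] at hmem
    exact hf _ hmem
  · refine fun hf p hp => eval_eq_zero_of_forall_rankOne m hp fun a w => ?_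
    obtain ⟨q, hq⟩ := exists_eval_genericRankOneJet_eq m a w
    rw [← hq, ← heval, hf, map_zero]

theorem isPrime_radical_jetIdeal_segreMinors [IsAlgClosed k] :
    (jetIdeal k (Fin 2 × Fin n) m (segreMinors k n)).radical.IsPrime := by
  rw [← MvPolynomial.vanishingIdeal_zeroLocus_eq_radical (K := k),
    vanishingIdeal_zeroLocus_jetIdeal_segreMinors]
  exact RingHom.ker_isPrime _

end SegreJets

section SegreMinors

open MvPolynomial

variable {k : Type*} [CommRing k] {n : ℕ}

variable (k) in
def segreMinor (i j : Fin n) : MvPolynomial (Fin 2 × Fin n) k :=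
  X (0, i) * X (1, j) - X (0, j) * X (1, i)

theorem segreMinors_subset_singularAtZero :
    segreMinors k n ⊆ singularAtZero (Fin 2 × Fin n) k := by
  rintro _ ⟨i, j, rfl⟩
  refine ⟨by simp, fun a => ?_⟩
  simp [Derivation.leibniz]

theorem constantCoeff_pderiv_pderiv_segreMinor (i j i' j' : Fin n) :
    constantCoeff (pderiv (0, i') (pderiv (1, j') (segreMinor k i j))) =
      (if i' = i ∧ j' = j then 1 else 0) - (if i' = j ∧ j' = i then 1 else 0) := by
  simp only [segreMinor, map_sub, Derivation.leibniz, pderiv_X, Pi.single_apply]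
  split_ifs <;> simp_all

theorem hessianAtZero_segreMinor {i j : Fin n} (hij : i < j) :
    hessianAtZero (fun t : {x : Fin n × Fin n // x.1 < x.2} => ((0, t.1.1), (1, t.1.2)))
      (segreMinor k i j) = Pi.single ⟨(i, j), hij⟩ 1 := by
  funext ⟨⟨i', j'⟩, hij'⟩
  have hswap : ¬ (i' = j ∧ j' = i) := by
    rintro ⟨rfl, rfl⟩
    exact lt_asymm hij hij'
  simp [hessianAtZero, constantCoeff_pderiv_pderiv_segreMinor, Pi.single_apply, hswap]

theorem choose_two_le_card_of_span_eq_span_segreMinors [Nontrivial k] {ι : Type*} [Fintype ι]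
    (g : ι → MvPolynomial (Fin 2 × Fin n) k)
    (hg : Ideal.span (Set.range g) = Ideal.span (segreMinors k n)) :
    n.choose 2 ≤ Fintype.card ι := by
  classical
  let T := {x : Fin n × Fin n // x.1 < x.2}
  let H := hessianAtZero (R := k) fun t : T => (((0 : Fin 2), t.1.1), ((1 : Fin 2), t.1.2))
  have hsing : Set.range g ⊆ singularAtZero (Fin 2 × Fin n) k :=
    Ideal.span_le.1 (hg ▸ Ideal.span_le.2 segreMinors_subset_singularAtZero)
  have hspan : Submodule.span k (Set.range (H ∘ g)) = ⊤ := by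
    rw [eq_top_iff, ← (Pi.basisFun k T).span_eq, Submodule.span_le, Set.range_comp]
    rintro _ ⟨⟨⟨i, j⟩, hij⟩, rfl⟩
    rw [Pi.basisFun_apply, ← hessianAtZero_segreMinor hij]
    exact hessianAtZero_mem_span _ hsing (hg ▸ Ideal.subset_span ⟨i, j, rfl⟩)
  have := finrank_le_of_span_eq_top hspan
  rwa [Module.finrank_fintype_fun_eq_card, Fintype.card_subtype,
    Fintype.card_product_filter_lt, Fintype.card_fin] at this

end SegreMinors

theorem stmt13 (k : Type*) [Field k] [IsAlgClosed k] (n : ℕ) (hn : 3 ≤ n) :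
    (∀ m : ℕ, 1 ≤ m →
      (jetIdeal k (Fin 2 × Fin n) m (segreMinors k n)).radical.IsPrime) ∧
    ¬ ∃ g : Fin (2 * n - (n + 1)) → MvPolynomial (Fin 2 × Fin n) k,
        Ideal.span (Set.range g) = Ideal.span (segreMinors k n) := by
  refine ⟨fun m _ => isPrime_radical_jetIdeal_segreMinors m, ?_⟩
  rintro ⟨g, hg⟩
  have hcard := choose_two_le_card_of_span_eq_span_segreMinors g hg
  have hn' : n ≤ n.choose 2 := by
    rw [Nat.choose_two_right, Nat.le_div_iff_mul_le two_pos]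
    exact Nat.mul_le_mul_left n (by omega)
  rw [Fintype.card_fin] at hcard
  omega
end
end
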